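/- arXiv:1803.05966 — 3 statements merged into one kernel-verified Lean document; each statement's English description precedes it below -/
import Mathlib

section
/- For any set C of code words and any shift-invariant Borel probability measure μ on the coded subshift X_C, the set X_C \ (L_C ∪ B_C) has μ-measure zero. -/
open Filter Topology MeasureTheory

variable {A : Type*}

/-- The left shift on bi-infinite sequences. -/
def shift (x : ℤ → A) : ℤ → A := fun n => x (n + 1)

/-- The word `x([i, i+n))` read off from a point `x`. -/
def wordAt (x : ℤ → A) (i : ℤ) (n : ℕ) : List A :=
  (List.range n).map fun j => x (i + j)

/-- A subshift: a closed, shift-invariant subset of the full shift. -/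
def IsSubshift [TopologicalSpace A] (X : Set (ℤ → A)) : Prop :=
  IsClosed X ∧ ∀ x ∈ X, shift x ∈ X

/-- The set of words of length `n` appearing in points of `X`. -/
def language (X : Set (ℤ → A)) (n : ℕ) : Set (List A) :=
  {w | ∃ x ∈ X, ∃ i : ℤ, wordAt x i n = w}

/-- Topological entropy of a subshift, as a limsup. -/
noncomputable def entropy (X : Set (ℤ → A)) : ℝ :=
  Filter.limsup (fun n : ℕ => Real.log ((language X n).ncard) / n) Filter.atTop

/-- The set `C_n` of code words of length `n`. -/
def Cwords (C : Set (List A)) (n : ℕ) : Set (List A) := {w ∈ C | w.length = n}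

/-- The generating function `f_C(α) = ∑_{j ≥ 1} |C_j| e^{-jα}`, valued in `[0, ∞]`. -/
noncomputable def fC (C : Set (List A)) (α : ℝ) : ENNReal :=
  ∑' n : ℕ, ((Cwords C (n + 1)).ncard : ENNReal) *
    ENNReal.ofReal (Real.exp (-((n : ℝ) + 1) * α))

/-- The set `B_C` of bi-infinite concatenations of code words. -/
def Bset (C : Set (List A)) : Set (ℤ → A) :=
  {x | ∃ s : ℤ → ℤ, StrictMono s ∧ Tendsto s atTop atTop ∧ Tendsto s atBot atBot ∧
    ∀ k : ℤ, wordAt x (s k) (s (k + 1) - s k).toNat ∈ C}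

/-- The set `L_C` of limits of single code words. -/
def Lset (C : Set (List A)) : Set (ℤ → A) :=
  {x | ∀ k : ℕ, ∃ w ∈ C, wordAt x (-(k : ℤ)) (2 * k + 1) <:+: w}

/-- The coded subshift `X_C`, the closure of `B_C`. -/
def Xset [TopologicalSpace A] (C : Set (List A)) : Set (ℤ → A) := closure (Bset C)

/-- `C` has unique decomposition: no finite word is a concatenation of `C`-words
in two different ways. -/
def UniqueDecomposition (C : Set (List A)) : Prop :=
  ∀ l l' : List (List A), (∀ w ∈ l, w ∈ C) → (∀ w ∈ l', w ∈ C) →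
    l.flatten = l'.flatten → l = l'

/-- `n`-letter prefixes of words in `C`. -/
def Pn (C : Set (List A)) (n : ℕ) : Set (List A) :=
  {w | w.length = n ∧ ∃ v ∈ C, w <+: v}

/-- `n`-letter suffixes of words in `C`. -/
def Sn (C : Set (List A)) (n : ℕ) : Set (List A) :=
  {w | w.length = n ∧ ∃ v ∈ C, w <:+ v}

/-- `n`-letter subwords of words in `C`. -/
def Wn (C : Set (List A)) (n : ℕ) : Set (List A) :=
  {w | w.length = n ∧ ∃ v ∈ C, w <:+: v}

/-- The measure of the cylinder set of a word. -/
noncomputable def cylMeasure [MeasurableSpace A] (μ : Measure (ℤ → A)) (w : List A) : ℝ :=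
  (μ {x : ℤ → A | wordAt x 0 w.length = w}).toReal

/-- Measure-theoretic (Kolmogorov–Sinai) entropy of a shift-invariant measure. -/
noncomputable def measEntropy [MeasurableSpace A] [Fintype A] [DecidableEq A]
    (μ : Measure (ℤ → A)) : ℝ :=
  Filter.limsup (fun n : ℕ =>
    (-1 / (n : ℝ)) * ∑ w : Fin n → A,
      cylMeasure μ (List.ofFn w) * Real.log (cylMeasure μ (List.ofFn w))) Filter.atTop

/-! A point `x ∈ X_C` outside `L_C` has a window `x[-k, k]` that fits in no code word. By Poincaré
recurrence for the shift and its inverse, almost every such `x` shows such a bad window arbitrarily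
far to the right and to the left. Every approximant of `x` in `B_C` has to cut inside each bad
window, so a limit of the cut sets of the approximants (compactness of `ℤ → Bool`) is a set of cuts
of `x` itself, unbounded in both directions, with code words between consecutive cuts: `x ∈ B_C`. -/

/-- `wordAt` casts `List.range n` to `List ℤ` through the list monad; this undoes the cast. -/
theorem wordAt_eq_map_range (x : ℤ → A) (i : ℤ) (n : ℕ) :
    wordAt x i n = (List.range n).map fun j : ℕ => x (i + j) := by
  simp only [wordAt, List.pure_def, List.bind_eq_flatMap, ← List.map_eq_flatMap, List.map_map]
  rfl

theorem wordAt_append (x : ℤ → A) (i : ℤ) (m n : ℕ) :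
    wordAt x i (m + n) = wordAt x i m ++ wordAt x (i + m) n := by
  simp only [wordAt_eq_map_range, List.range_add, List.map_append, List.map_map]
  congr 1
  refine List.map_congr_left fun j _ => ?_
  simp only [Function.comp_apply]
  push_cast
  ring_nf

theorem wordAt_congr {x y : ℤ → A} {i : ℤ} {n : ℕ}
    (h : ∀ j, i ≤ j → j < i + n → x j = y j) : wordAt x i n = wordAt y i n := by
  simp only [wordAt_eq_map_range]
  exact List.map_congr_left fun j hj => h _ (by omega) (by simp at hj; omega)

theorem wordAt_infix (x : ℤ → A) {i i' : ℤ} {n n' : ℕ} (hi : i' ≤ i) (hn : i + n ≤ i' + n') :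
    wordAt x i n <:+: wordAt x i' n' := by
  obtain ⟨a, rfl⟩ : ∃ a : ℕ, i = i' + a := ⟨(i - i').toNat, by omega⟩
  obtain ⟨b, rfl⟩ : ∃ b : ℕ, n' = a + n + b := ⟨n' - a - n, by omega⟩
  rw [wordAt_append, wordAt_append]
  exact ⟨_, _, rfl⟩

theorem wordAt_shift_iterate (x : ℤ → A) (m : ℕ) (i : ℤ) (n : ℕ) :
    wordAt (shift^[m] x) i n = wordAt x (i + m) n := by
  induction m generalizing x with
  | zero => simp
  | succ m ih =>
    rw [Function.iterate_succ_apply, ih]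
    simp only [wordAt_eq_map_range, shift]
    refine List.map_congr_left fun j _ => congrArg x ?_
    push_cast
    ring

structure IsCutSet (C : Set (List A)) (x : ℤ → A) (T : Set ℤ) : Prop where
  exists_gt : ∀ b, ∃ q ∈ T, b < q
  exists_lt : ∀ b, ∃ q ∈ T, q < b
  wordAt_mem : ∀ p ∈ T, ∀ q ∈ T, p < q → (∀ r ∈ T, r ≤ p ∨ q ≤ r) →
    wordAt x p (q - p).toNat ∈ C

theorem isCutSet_range_of_mem_Bset {C : Set (List A)} {x : ℤ → A} {s : ℤ → ℤ} (hs : StrictMono s)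
    (htop : Tendsto s atTop atTop) (hbot : Tendsto s atBot atBot)
    (hword : ∀ k, wordAt x (s k) (s (k + 1) - s k).toNat ∈ C) :
    IsCutSet C x (Set.range s) where
  exists_gt b := by
    obtain ⟨k, hk⟩ := (htop.eventually (eventually_gt_atTop b)).exists
    exact ⟨s k, ⟨k, rfl⟩, hk⟩
  exists_lt b := by
    obtain ⟨k, hk⟩ := (hbot.eventually (eventually_lt_atBot b)).exists
    exact ⟨s k, ⟨k, rfl⟩, hk⟩
  wordAt_mem := by
    rintro _ ⟨k, rfl⟩ _ ⟨l, rfl⟩ hkl hgap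
    obtain rfl : l = k + 1 := by
      have hkl := hs.lt_iff_lt.1 hkl
      rcases hgap _ ⟨k + 1, rfl⟩ with h | h
      · exact absurd (hs.le_iff_le.1 h) (by omega)
      · exact le_antisymm (hs.le_iff_le.1 h) (by omega)
    exact hword k

theorem IsCutSet.exists_enum {C : Set (List A)} {x : ℤ → A} {T : Set ℤ} (hT : IsCutSet C x T) :
    ∃ s : ℤ → ℤ, StrictMono s ∧ Set.range s = T := by
  classical
  have : NoMaxOrder T := ⟨fun ⟨b, _⟩ => (hT.exists_gt b).elim fun q hq => ⟨⟨q, hq.1⟩, hq.2⟩⟩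
  have : NoMinOrder T := ⟨fun ⟨b, _⟩ => (hT.exists_lt b).elim fun q hq => ⟨⟨q, hq.1⟩, hq.2⟩⟩
  have : Nonempty T := (hT.exists_gt 0).elim fun q hq => ⟨⟨q, hq.1⟩⟩
  let := LinearLocallyFiniteOrder.succOrder T
  let := LinearLocallyFiniteOrder.predOrder T
  let e := (orderIsoIntOfLinearSuccPredArch (ι := T)).symm
  refine ⟨fun k => e k, fun k l hkl => e.strictMono hkl, ?_⟩
  ext q
  exact ⟨by rintro ⟨k, rfl⟩; exact (e k).2, fun hq => ⟨e.symm ⟨q, hq⟩, by simp⟩⟩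

theorem mem_Bset_iff {C : Set (List A)} {x : ℤ → A} : x ∈ Bset C ↔ ∃ T, IsCutSet C x T := by
  constructor
  · rintro ⟨s, hs, htop, hbot, hword⟩
    exact ⟨_, isCutSet_range_of_mem_Bset hs htop hbot hword⟩
  · rintro ⟨T, hT⟩
    obtain ⟨s, hs, rfl⟩ := hT.exists_enum
    refine ⟨s, hs, tendsto_atTop_atTop_of_monotone hs.monotone fun b => ?_,
      tendsto_atBot_atBot_of_monotone hs.monotone fun b => ?_, fun k => ?_⟩
    · obtain ⟨_, ⟨k, rfl⟩, hk⟩ := hT.exists_gt b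
      exact ⟨k, hk.le⟩
    · obtain ⟨_, ⟨k, rfl⟩, hk⟩ := hT.exists_lt b
      exact ⟨k, hk.le⟩
    · refine hT.wordAt_mem _ ⟨k, rfl⟩ _ ⟨k + 1, rfl⟩ (hs (by omega)) ?_
      rintro _ ⟨l, rfl⟩
      rcases le_or_gt l k with h | h
      · exact Or.inl (hs.monotone h)
      · exact Or.inr (hs.monotone (by omega))

def IsBadWindow (C : Set (List A)) (x : ℤ → A) (a : ℤ) (L : ℕ) : Prop :=
  ∀ w ∈ C, ¬ wordAt x a L <:+: w

theorem IsCutSet.exists_mem_of_isBadWindow {C : Set (List A)} {x : ℤ → A} {T : Set ℤ}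
    (hT : IsCutSet C x T) {a : ℤ} {L : ℕ} (hbad : IsBadWindow C x a L) :
    ∃ q ∈ T, a < q ∧ q < a + L := by
  -- otherwise the code word between the last cut `p ≤ a` and the next cut `q` covers the window
  obtain ⟨p, ⟨hpT, hpa⟩, hpmax⟩ := Int.exists_greatest_of_bdd (P := fun p => p ∈ T ∧ p ≤ a)
    ⟨a, fun _ h => h.2⟩ ((hT.exists_lt (a + 1)).imp fun _ h => ⟨h.1, by omega⟩)
  obtain ⟨q, ⟨hqT, hpq⟩, hqmin⟩ := Int.exists_least_of_bdd (P := fun q => q ∈ T ∧ p < q)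
    ⟨p, fun _ h => h.2.le⟩ (hT.exists_gt p)
  have haq : a < q := by
    by_contra! h
    exact absurd (hpmax q ⟨hqT, h⟩) (by omega)
  refine ⟨q, hqT, haq, ?_⟩
  by_contra! hq
  have hword := hT.wordAt_mem p hpT q hqT hpq fun r hr => by
    by_contra! h
    exact absurd (hqmin r ⟨hr, h.1⟩) (by omega)
  exact hbad _ hword (wordAt_infix x hpa (by omega))

section Closure

variable [TopologicalSpace A] [DiscreteTopology A] {C : Set (List A)} {x : ℤ → A}

/-- Cut sets of approximants of `x`, viewed in the compact space `ℤ → Bool`, accumulate at a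
set `T`. -/
theorem exists_limit_cutSet (hx : x ∈ closure (Bset C)) :
    ∃ T : Set ℤ, ∀ F : Finset ℤ,
      ∃ y T', IsCutSet C y T' ∧ ∀ i ∈ F, y i = x i ∧ (i ∈ T' ↔ i ∈ T) := by
  classical
  have happrox (F : Finset ℤ) : ∃ y T', IsCutSet C y T' ∧ ∀ i ∈ F, y i = x i := by
    obtain ⟨y, hyF, hyB⟩ := mem_closure_iff_nhds.1 hx _
      (set_pi_mem_nhds F.finite_toSet fun i _ => (isOpen_discrete {x i}).mem_nhds rfl)
    obtain ⟨T', hT'⟩ := mem_Bset_iff.1 hyB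
    exact ⟨y, T', hT', hyF⟩
  choose y T' hT' hyx using happrox
  obtain ⟨χ, hχ⟩ := exists_clusterPt_of_compactSpace (map (fun F i => decide (i ∈ T' F)) atTop)
  refine ⟨{i | χ i}, fun F => ?_⟩
  obtain ⟨G, hGχ, hFG⟩ := ((mapClusterPt_iff_frequently.1 hχ _ (set_pi_mem_nhds F.finite_toSet
    fun i _ => (isOpen_discrete {χ i}).mem_nhds rfl)).and_eventually (eventually_ge_atTop F)).exists
  refine ⟨y G, T' G, hT' G, fun i hi => ⟨hyx G i (hFG hi), ?_⟩⟩
  rw [Set.mem_ofPred_eq, ← (hGχ i hi : decide _ = _), decide_eq_true_iff]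

theorem mem_Bset_of_frequently_isBadWindow {L : ℕ} (hx : x ∈ closure (Bset C))
    (hfwd : ∃ᶠ a in atTop, IsBadWindow C x a L) (hbwd : ∃ᶠ a in atBot, IsBadWindow C x a L) :
    x ∈ Bset C := by
  obtain ⟨T, hT⟩ := exists_limit_cutSet hx
  have hcut (a : ℤ) (ha : IsBadWindow C x a L) : ∃ q ∈ T, a < q ∧ q < a + L := by
    obtain ⟨y, T', hT', hagree⟩ := hT (Finset.Icc a (a + L))
    have hya : IsBadWindow C y a L := by
      rwa [IsBadWindow, wordAt_congr fun j h1 h2 => (hagree j (by simp; omega)).1]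
    obtain ⟨q, hq, haq, hqa⟩ := hT'.exists_mem_of_isBadWindow hya
    exact ⟨q, (hagree q (by simp; omega)).2.1 hq, haq, hqa⟩
  refine mem_Bset_iff.2 ⟨T, fun b => ?_, fun b => ?_, fun p hp q hq hpq hgap => ?_⟩
  · obtain ⟨a, hba, ha⟩ := frequently_atTop.1 hfwd b
    obtain ⟨q, hq, haq, -⟩ := hcut a ha
    exact ⟨q, hq, by omega⟩
  · obtain ⟨a, hab, ha⟩ := frequently_atBot.1 hbwd (b - L)
    obtain ⟨q, hq, -, hqa⟩ := hcut a ha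
    exact ⟨q, hq, by omega⟩
  · obtain ⟨y, T', hT', hagree⟩ := hT (Finset.Icc p q)
    have hmem (r : ℤ) (hpr : p ≤ r) (hrq : r ≤ q) : r ∈ T' ↔ r ∈ T :=
      (hagree r (Finset.mem_Icc.2 ⟨hpr, hrq⟩)).2
    have hword := hT'.wordAt_mem p ((hmem p le_rfl hpq.le).2 hp) q ((hmem q hpq.le le_rfl).2 hq)
      hpq fun r hr => by
        by_contra! h
        exact absurd (hgap r ((hmem r h.1.le h.2.le).1 hr)) (by omega)
    rwa [wordAt_congr fun j h1 h2 => (hagree j (by simp; omega)).1] at hword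

end Closure

section Recurrence

variable [MeasurableSpace A]

def shiftEquiv : (ℤ → A) ≃ᵐ (ℤ → A) where
  toFun := shift
  invFun x n := x (n - 1)
  left_inv x := by funext n; simp [shift]
  right_inv x := by funext n; simp [shift]
  measurable_toFun := measurable_pi_lambda _ fun n => measurable_pi_apply (n + 1)
  measurable_invFun := measurable_pi_lambda _ fun n => measurable_pi_apply (n - 1)

theorem wordAt_shiftEquiv_symm_iterate (x : ℤ → A) (m : ℕ) (i : ℤ) (n : ℕ) :
    wordAt ((shiftEquiv (A := A)).symm^[m] x) i n = wordAt x (i - m) n := by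
  induction m generalizing x with
  | zero => simp
  | succ m ih =>
    rw [Function.iterate_succ_apply, ih]
    simp only [wordAt_eq_map_range]
    refine List.map_congr_left fun j _ => ?_
    change x _ = x _
    congr 1
    push_cast
    ring

theorem measurableSet_isBadWindow [Countable A] [MeasurableSingletonClass A]
    (C : Set (List A)) (a : ℤ) (L : ℕ) : MeasurableSet {x : ℤ → A | IsBadWindow C x a L} := by
  have hword (x : ℤ → A) : wordAt x a L = List.ofFn fun j : Fin L => x (a + j) := by
    rw [wordAt_eq_map_range, List.ofFn_eq_map]
    exact List.ext_getElem (by simp) (by simp)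
  have hwindow : Measurable fun (x : ℤ → A) (j : Fin L) => x (a + j) :=
    measurable_pi_lambda _ fun j => measurable_pi_apply _
  simp only [IsBadWindow, hword]
  exact hwindow (MeasurableSet.of_discrete (s := {v : Fin L → A | ∀ w ∈ C, ¬ List.ofFn v <:+: w}))

/-- Poincaré recurrence, applied to the shift and to its inverse. -/
theorem ae_frequently_isBadWindow [Countable A] [MeasurableSingletonClass A]
    {μ : Measure (ℤ → A)} [IsFiniteMeasure μ] (hμ : MeasurePreserving shift μ μ)
    (C : Set (List A)) (a : ℤ) (L : ℕ) :
    ∀ᵐ x ∂μ, IsBadWindow C x a L →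
      (∃ᶠ b in atTop, IsBadWindow C x b L) ∧ ∃ᶠ b in atBot, IsBadWindow C x b L := by
  have hs := (measurableSet_isBadWindow C a L).nullMeasurableSet (μ := μ)
  have hμ' : MeasurePreserving shiftEquiv μ μ := hμ
  filter_upwards [hμ.conservative.ae_mem_imp_frequently_image_mem hs,
    (hμ'.symm _).conservative.ae_mem_imp_frequently_image_mem hs] with x hfwd hbwd hx
  have hup : Tendsto (fun n : ℕ => a + n) atTop atTop :=
    tendsto_atTop_add_const_left _ a tendsto_natCast_atTop_atTop
  have hdown : Tendsto (fun n : ℕ => a - n) atTop atBot := by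
    simpa only [sub_eq_add_neg, Function.comp_def] using
      tendsto_atBot_add_const_left _ a (tendsto_neg_atTop_atBot.comp tendsto_natCast_atTop_atTop)
  refine ⟨hup.frequently (p := fun b => IsBadWindow C x b L) ?_,
    hdown.frequently (p := fun b => IsBadWindow C x b L) ?_⟩
  · simpa only [IsBadWindow, wordAt_shift_iterate] using hfwd hx
  · simpa only [IsBadWindow, wordAt_shiftEquiv_symm_iterate] using hbwd hx

end Recurrence

theorem stmt3_general [Fintype A] [TopologicalSpace A] [DiscreteTopology A]
    [MeasurableSpace A] [MeasurableSingletonClass A]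
    (C : Set (List A)) (μ : Measure (ℤ → A)) [IsProbabilityMeasure μ]
    (hinv : MeasurePreserving shift μ μ) :
    μ (Xset C \ (Lset C ∪ Bset C)) = 0 := by
  have hrec : ∀ᵐ x ∂μ, ∀ k : ℕ, IsBadWindow C x (-k) (2 * k + 1) →
      (∃ᶠ b in atTop, IsBadWindow C x b (2 * k + 1)) ∧
        ∃ᶠ b in atBot, IsBadWindow C x b (2 * k + 1) :=
    ae_all_iff.2 fun k => ae_frequently_isBadWindow hinv C _ _
  refine measure_mono_null ?_ (ae_iff.1 hrec)
  rintro x ⟨hxX, hx⟩ hxrec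
  obtain ⟨k, hk⟩ : ∃ k : ℕ, IsBadWindow C x (-k) (2 * k + 1) := by
    simpa [Lset, IsBadWindow] using fun h => hx (Or.inl h)
  exact hx (Or.inr (mem_Bset_of_frequently_isBadWindow hxX (hxrec k hk).1 (hxrec k hk).2))

/-- for any shift-invariant Borel probability measure `μ` on `X_C`,
the set `X_C \ (L_C ∪ B_C)` has measure zero. -/
theorem stmt3 [Fintype A] [TopologicalSpace A] [DiscreteTopology A]
    [MeasurableSpace A] [MeasurableSingletonClass A]
    (C : Set (List A)) (μ : Measure (ℤ → A)) [IsProbabilityMeasure μ]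
    (hinv : MeasurePreserving shift μ μ) (hsupp : μ (Xset C) = 1) :
    μ (Xset C \ (Lset C ∪ Bset C)) = 0 :=
  stmt3_general C μ hinv
end

section
/- If C has unique decomposition and f_C(α) > 1 (possibly = ∞), then h(X_C) > α. -/
/-!
A finite set `D` of code words already has `∑_{w ∈ D} e^{-α|w|} = T > 1`, with all lengths at
most `N`. Expanding `T ^ m` gives a sum over the `m`-fold concatenations of words of `D`; by unique
decomposition these are pairwise distinct, and each is a word of `X_C` (it occurs in the periodic
point repeating it). Grouping by length `k ∈ [m, m N]` yields `T ^ m ≤ ∑_k |L_k(X_C)| e^{-α k}`,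
so some length `k` has `log |L_k| ≥ α k + m log T - log (m N)`, and `m ≥ k / N` gives
`h(X_C) ≥ α + log T / (2 N)`.
-/

open Filter Topology MeasureTheory

variable {A : Type*}

lemma Int.exists_eq_mul_add_of_pos {m : ℕ} (hm : 0 < m) (j : ℤ) :
    ∃ q : ℤ, ∃ r : ℕ, r < m ∧ j = m * q + r := by
  have := Int.emod_nonneg j (by omega : (m : ℤ) ≠ 0)
  have := Int.emod_lt_of_pos j (by omega : (0 : ℤ) < m)
  have := Int.mul_ediv_add_emod j m
  exact ⟨j / m, (j % m).toNat, by omega, by omega⟩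

lemma Finset.exists_le_card_mul_of_le_sum {ι : Type*} {s : Finset ι} {b : ι → ℝ} {x : ℝ}
    (hx : 0 < x) (h : x ≤ ∑ i ∈ s, b i) : ∃ i ∈ s, x ≤ s.card * b i := by
  have hs : s.Nonempty := Finset.nonempty_of_sum_ne_zero (f := b) (by linarith)
  have hcard : (0 : ℝ) < s.card := by exact_mod_cast hs.card_pos
  obtain ⟨i, hi, hle⟩ := Finset.exists_le_of_sum_le hs (f := fun _ => x / s.card) (g := b) <| by
    rwa [Finset.sum_const, nsmul_eq_mul, mul_div_cancel₀ _ hcard.ne']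
  exact ⟨i, hi, (div_le_iff₀' hcard).mp hle⟩

lemma eventually_log_mul_le (N : ℕ) {c : ℝ} (hc : 0 < c) :
    ∀ᶠ m : ℕ in atTop, Real.log (m * N) ≤ c * m := by
  rcases N.eq_zero_or_pos with rfl | hN
  · exact Eventually.of_forall fun m => by simp; positivity
  have hmN : Tendsto (fun m : ℕ => (m : ℝ) * N) atTop atTop :=
    tendsto_natCast_atTop_atTop.atTop_mul_const (by positivity)
  filter_upwards [(Real.isLittleO_log_id_atTop.comp_tendsto hmN).def (c := c / N) (by positivity)]
    with m hm
  simp only [Function.comp_apply, id, Real.norm_eq_abs] at hm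
  rw [abs_of_nonneg (by positivity : (0 : ℝ) ≤ m * N)] at hm
  calc Real.log (m * N) ≤ |Real.log (m * N)| := le_abs_self _
    _ ≤ c / N * (m * N) := hm
    _ = c * m := by field_simp

theorem lt_limsup_log_div_of_pow_le {a : ℕ → ℕ}
    (hbdd : IsBoundedUnder (· ≤ ·) atTop fun n : ℕ => Real.log (a n) / n)
    {z T : ℝ} (hz : 0 < z) (hT : 1 < T) {N : ℕ}
    (h : ∀ m, 0 < m → T ^ m ≤ ∑ k ∈ Finset.Icc m (m * N), (a k : ℝ) * z ^ k) :
    -Real.log z < limsup (fun n : ℕ => Real.log (a n) / n) atTop := by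
  have hN : 0 < N := by
    by_contra! hN
    have := h 1 one_pos
    simp_all
    linarith
  have hlogT : 0 < Real.log T := Real.log_pos hT
  set δ := Real.log T / (2 * N)
  -- Pigeonhole gives `T ^ m ≤ m N a_k z ^ k` with `m ≤ k ≤ m N`, so `a_k z ^ k` gains at least
  -- `k log T / N`, of which `log (m N)` eats at most half once `m` is large.
  have hgood (m : ℕ) (hm : 0 < m) (hlog : Real.log (m * N) ≤ Real.log T / 2 * m) :
      ∃ k, m ≤ k ∧ -Real.log z + δ ≤ Real.log (a k) / k := by
    obtain ⟨k, hk, hle⟩ :=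
      Finset.exists_le_card_mul_of_le_sum (pow_pos (by linarith) m) (h m hm)
    obtain ⟨hmk, hkN⟩ := Finset.mem_Icc.mp hk
    have hcard : ((Finset.Icc m (m * N)).card : ℝ) ≤ m * N := by
      rw [Nat.card_Icc]
      exact_mod_cast (by omega : m * N + 1 - m ≤ m * N)
    have hak : 0 < (a k : ℝ) := Nat.cast_pos.mpr <| Nat.pos_of_ne_zero fun h0 => by
      simp only [h0, Nat.cast_zero, zero_mul, mul_zero] at hle
      linarith [pow_pos (zero_lt_one.trans hT) m]
    have hbound : T ^ m ≤ m * N * (a k * z ^ k) :=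
      hle.trans (mul_le_mul_of_nonneg_right hcard (by positivity))
    have hlog' := Real.log_le_log (by positivity) hbound
    rw [Real.log_pow, Real.log_mul (x := m * N) (by positivity) (by positivity),
      Real.log_mul (x := a k) (by positivity) (by positivity), Real.log_pow] at hlog'
    have hkN' : (k : ℝ) ≤ m * N := by exact_mod_cast hkN
    have hδk : δ * k ≤ Real.log T / 2 * m := by
      rw [div_mul_eq_mul_div, div_le_iff₀ (by positivity)]
      nlinarith
    refine ⟨k, hmk, ?_⟩
    rw [le_div_iff₀ (by exact_mod_cast hm.trans_le hmk)]
    nlinarith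
  have hfreq : ∃ᶠ k in atTop, -Real.log z + δ ≤ Real.log (a k) / k := by
    obtain ⟨m₀, hm₀⟩ := eventually_atTop.mp (eventually_log_mul_le N (half_pos hlogT))
    refine frequently_atTop.mpr fun K => ?_
    obtain ⟨k, hk, hk'⟩ := hgood (max (max K m₀) 1) (by omega) (hm₀ _ (by omega))
    exact ⟨k, by omega, hk'⟩
  exact (lt_add_of_pos_right _ (by positivity)).trans_le (le_limsup_of_frequently_le hfreq hbdd)

section Words

variable (x : ℤ → A) (i : ℤ) (n : ℕ)

lemma wordAt_eq_map : wordAt x i n = (List.range n).map fun j : ℕ => x (i + j) := by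
  simp [wordAt, ← List.map_eq_flatMap]

@[simp]
lemma length_wordAt : (wordAt x i n).length = n := by
  simp [wordAt_eq_map]

@[simp]
lemma getElem_wordAt (t : ℕ) (ht : t < (wordAt x i n).length) :
    (wordAt x i n)[t] = x (i + t) := by
  simp [wordAt_eq_map]

end Words

section Concatenation

def periodicPoint (w : List A) (hw : 0 < w.length) (n : ℤ) : A :=
  w[(n % w.length).toNat]'(by
    have := Int.emod_lt_of_pos n (by exact_mod_cast hw : (0 : ℤ) < w.length); omega)

variable {w : List A} {hw : 0 < w.length}

lemma periodicPoint_periodic : Function.Periodic (periodicPoint w hw) w.length := by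
  intro n
  simp only [periodicPoint, Int.add_emod_right]

lemma periodicPoint_natCast {i : ℕ} (hi : i < w.length) : periodicPoint w hw i = w[i] := by
  have : (i : ℤ) % w.length = i := Int.emod_eq_of_lt (by omega) (by omega)
  simp [periodicPoint, this]

lemma wordAt_periodicPoint (q : ℤ) {i n : ℕ} (h : i + n ≤ w.length) :
    wordAt (periodicPoint w hw) (w.length * q + i) n = (w.drop i).take n := by
  refine List.ext_getElem (by simp; omega) fun t ht _ => ?_
  rw [getElem_wordAt, List.getElem_take, List.getElem_drop,
    show (w.length : ℤ) * q + i + t = (i + t : ℕ) + q * w.length by push_cast; ring,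
    ← Int.cast_id (n := q), periodicPoint_periodic.int_mul q, periodicPoint_natCast]

variable {l : List (List A)}

/-- Block `l.length * q + r` of the periodic concatenation of `l` starts at
`l.flatten.length * q + |l[0]| + ⋯ + |l[r-1]|`. -/
def blockStart (l : List (List A)) (j : ℤ) : ℤ :=
  l.flatten.length * (j / l.length) + ((l.map List.length).take (j % l.length).toNat).sum

lemma blockStart_mul_add (q : ℤ) {r : ℕ} (hr : r ≤ l.length) (hl : 0 < l.length) :
    blockStart l (l.length * q + r) = l.flatten.length * q + ((l.map List.length).take r).sum := by
  rcases hr.lt_or_eq with hr | rfl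
  · obtain ⟨hq, hr⟩ := (Int.ediv_emod_unique (b := l.length) (by omega)).mpr
      ⟨(add_comm _ _ : (r : ℤ) + l.length * q = _), by omega, by omega⟩
    simp [blockStart, hq, hr]
  · obtain ⟨hq, hr⟩ := (Int.ediv_emod_unique (b := l.length) (by omega)).mpr
      ⟨(by ring : (0 : ℤ) + l.length * (q + 1) = l.length * q + l.length), le_rfl,
        by exact_mod_cast hl⟩
    simp [blockStart, hq, hr, List.length_flatten, List.take_of_length_le]
    ring

lemma blockStart_mul_add_add_one (q : ℤ) {r : ℕ} (hr : r < l.length) :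
    blockStart l (l.length * q + r + 1) = blockStart l (l.length * q + r) + l[r].length := by
  rw [show (l.length : ℤ) * q + r + 1 = l.length * q + (r + 1 : ℕ) by push_cast; ring,
    blockStart_mul_add q hr (Nat.zero_lt_of_lt hr),
    blockStart_mul_add q hr.le (Nat.zero_lt_of_lt hr),
    List.sum_take_succ _ _ (by simpa), List.getElem_map]
  push_cast
  ring

lemma wordAt_periodicPoint_blockStart (hk : 0 < l.flatten.length) (q : ℤ) {r : ℕ}
    (hr : r < l.length) :
    wordAt (periodicPoint l.flatten hk) (blockStart l (l.length * q + r)) l[r].length = l[r] := by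
  have hsucc := List.sum_take_succ (l.map List.length) r (by simpa)
  have hle := List.sum_take_add_sum_drop (l.map List.length) (r + 1)
  rw [List.getElem_map] at hsucc
  have hblock := List.drop_take_succ_flatten_eq_getElem l r hr
  rw [List.drop_take, hsucc, Nat.add_sub_cancel_left] at hblock
  rw [blockStart_mul_add q hr.le (Nat.zero_lt_of_lt hr), wordAt_periodicPoint q
      (by rw [List.length_flatten]; omega), hblock]

variable {C : Set (List A)}

theorem periodicPoint_flatten_mem_Bset (hk : 0 < l.flatten.length) (hC : ∀ u ∈ l, u ∈ C)
    (hpos : ∀ u ∈ l, 0 < u.length) : periodicPoint l.flatten hk ∈ Bset C := by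
  have hl : 0 < l.length := List.length_pos_iff.mpr (by rintro rfl; simp at hk)
  have hblocks : ∀ j, ∃ (r : ℕ) (hr : r < l.length),
      blockStart l (j + 1) = blockStart l j + l[r].length ∧
      wordAt (periodicPoint l.flatten hk) (blockStart l j) l[r].length = l[r] := by
    intro j
    obtain ⟨q, r, hr, rfl⟩ := Int.exists_eq_mul_add_of_pos hl j
    exact ⟨r, hr, blockStart_mul_add_add_one q hr, wordAt_periodicPoint_blockStart hk q hr⟩
  have hmono : StrictMono (blockStart l) := strictMono_int_of_lt_succ fun j => by
    obtain ⟨r, hr, hstep, -⟩ := hblocks j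
    have := hpos _ (List.getElem_mem hr)
    omega
  have hperiod (q : ℤ) : blockStart l (l.length * q) = l.flatten.length * q := by
    simpa using blockStart_mul_add q (Nat.zero_le _) hl
  have hk' : (1 : ℤ) ≤ l.flatten.length := by exact_mod_cast hk
  refine ⟨blockStart l, hmono, ?_, ?_, fun j => ?_⟩
  · refine tendsto_atTop_atTop_of_monotone hmono.monotone fun b => ⟨l.length * |b|, ?_⟩
    rw [hperiod]
    nlinarith [le_abs_self b, abs_nonneg b]
  · refine tendsto_atBot_atBot_of_monotone hmono.monotone fun b => ⟨l.length * -|b|, ?_⟩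
    rw [hperiod]
    nlinarith [neg_abs_le b, abs_nonneg b]
  · obtain ⟨r, hr, hstep, hword⟩ := hblocks j
    rw [hstep, add_sub_cancel_left, Int.toNat_natCast, hword]
    exact hC _ (List.getElem_mem hr)

theorem flatten_mem_language_Xset [TopologicalSpace A] (hl : l ≠ []) (hC : ∀ u ∈ l, u ∈ C)
    (hpos : ∀ u ∈ l, 0 < u.length) : l.flatten ∈ language (Xset C) l.flatten.length := by
  obtain ⟨u, hu⟩ := List.exists_mem_of_ne_nil l hl
  have hk : 0 < l.flatten.length := (hpos u hu).trans_le <| by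
    rw [List.length_flatten]; exact List.le_sum_of_mem (List.mem_map_of_mem hu)
  have hword := wordAt_periodicPoint (hw := hk) 0 (i := 0) (n := l.flatten.length) (zero_add _).le
  rw [mul_zero, Nat.cast_zero, add_zero, List.drop_zero, List.take_length] at hword
  exact ⟨_, subset_closure (periodicPoint_flatten_mem_Bset hk hC hpos), 0, hword⟩

end Concatenation

section Counting

variable {X : Set (ℤ → A)} {n : ℕ}

lemma length_of_mem_language {w : List A} (hw : w ∈ language X n) : w.length = n := by
  obtain ⟨x, -, i, rfl⟩ := hw
  exact length_wordAt x i n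

lemma finite_language [Finite A] : (language X n).Finite :=
  (List.finite_length_eq A n).subset fun _ => length_of_mem_language

lemma ncard_language_le [Fintype A] : (language X n).ncard ≤ Fintype.card A ^ n :=
  calc (language X n).ncard ≤ {w : List A | w.length = n}.ncard :=
        Set.ncard_le_ncard (fun _ => length_of_mem_language) (List.finite_length_eq A n)
    _ = Fintype.card A ^ n := by
        rw [← Nat.card_coe_set_eq, ← card_vector, ← Nat.card_eq_fintype_card]
        rfl

lemma isBoundedUnder_log_ncard_language [Fintype A] (X : Set (ℤ → A)) :
    IsBoundedUnder (· ≤ ·) atTop fun n : ℕ => Real.log (language X n).ncard / n := by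
  refine isBoundedUnder_of ⟨Real.log (Fintype.card A), fun n => ?_⟩
  rcases (language X n).ncard.eq_zero_or_pos with h | h
  · simp [h, Real.log_natCast_nonneg]
  rcases n.eq_zero_or_pos with rfl | hn
  · simp [Real.log_natCast_nonneg]
  rw [div_le_iff₀ (by positivity), mul_comm, ← Real.log_pow]
  exact Real.log_le_log (by positivity) (by exact_mod_cast ncard_language_le)

lemma sum_le_sum_ncard_language [Finite A] {S : Finset (List A)} {K : Finset ℕ} {g : ℕ → ℝ}
    (hS : ∀ w ∈ S, w.length ∈ K ∧ w ∈ language X w.length) (hg : ∀ k, 0 ≤ g k) :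
    ∑ w ∈ S, g w.length ≤ ∑ k ∈ K, (language X k).ncard * g k := by
  classical
  rw [← Finset.sum_fiberwise_of_maps_to fun w hw => (hS w hw).1]
  refine Finset.sum_le_sum fun k _ => ?_
  rw [Finset.sum_congr rfl fun w hw => by rw [(Finset.mem_filter.mp hw).2], Finset.sum_const,
    nsmul_eq_mul]
  gcongr
  · exact hg k
  rw [← Set.ncard_coe_finset]
  refine Set.ncard_le_ncard (fun w hw => ?_) finite_language
  obtain ⟨hwS, rfl⟩ := Finset.mem_filter.mp hw
  exact (hS w hwS).2

end Counting

theorem pow_sum_le_sum_ncard_language [Finite A] [TopologicalSpace A] {C : Set (List A)}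
    (hUD : UniqueDecomposition C) {D : Finset (List A)} {N : ℕ}
    (hD : ∀ w ∈ D, w ∈ C ∧ 0 < w.length ∧ w.length ≤ N) {z : ℝ} (hz : 0 ≤ z) {m : ℕ}
    (hm : 0 < m) :
    (∑ w ∈ D, z ^ w.length) ^ m ≤
      ∑ k ∈ Finset.Icc m (m * N), (language (Xset C) k).ncard * z ^ k := by
  classical
  set P := Fintype.piFinset fun _ : Fin m => D
  have hPC {p : Fin m → List A} (hp : p ∈ P) : ∀ u ∈ List.ofFn p, u ∈ C :=
    List.forall_mem_ofFn_iff.mpr fun i => (hD _ (Fintype.mem_piFinset.mp hp i)).1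
  have hlen (p : Fin m → List A) : (List.ofFn p).flatten.length = ∑ i, (p i).length := by
    simp [List.length_flatten, List.sum_ofFn]
  have hinj : Set.InjOn (fun p => (List.ofFn p).flatten) P := fun p hp p' hp' h =>
    List.ofFn_injective (hUD _ _ (hPC hp) (hPC hp') h)
  calc (∑ w ∈ D, z ^ w.length) ^ m = ∑ p ∈ P, ∏ i, z ^ (p i).length := Finset.sum_pow' _ _ _
    _ = ∑ p ∈ P, z ^ (List.ofFn p).flatten.length := by
        simp only [hlen, Finset.prod_pow_eq_pow_sum]
    _ = ∑ w ∈ P.image fun p => (List.ofFn p).flatten, z ^ w.length :=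
        (Finset.sum_image (f := fun w => z ^ w.length) hinj).symm
    _ ≤ _ := sum_le_sum_ncard_language ?_ fun k => pow_nonneg hz k
  simp only [Finset.forall_mem_image]
  intro p hp
  have hpD := Fintype.mem_piFinset.mp hp
  refine ⟨Finset.mem_Icc.mpr ⟨?_, ?_⟩, flatten_mem_language_Xset ?_ (hPC hp) ?_⟩
  · calc m = ∑ _i : Fin m, 1 := by simp
      _ ≤ _ := by rw [hlen]; exact Finset.sum_le_sum fun i _ => (hD _ (hpD i)).2.1
  · calc _ = ∑ i, (p i).length := hlen p
      _ ≤ ∑ _i : Fin m, N := Finset.sum_le_sum fun i _ => (hD _ (hpD i)).2.2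
      _ = m * N := by simp
  · simpa [List.ofFn_eq_nil_iff] using hm.ne'
  · exact List.forall_mem_ofFn_iff.mpr fun i => (hD _ (hpD i)).2.1

lemma exists_finset_one_lt_sum_exp_pow [Finite A] {C : Set (List A)} {α : ℝ}
    (hf : 1 < fC C α) :
    ∃ D : Finset (List A), (∀ w ∈ D, w ∈ C ∧ 0 < w.length) ∧
      1 < ∑ w ∈ D, Real.exp (-α) ^ w.length := by
  classical
  have hfin (j : ℕ) : (Cwords C j).Finite :=
    (List.finite_length_eq A j).subset fun _ hw => hw.2
  rw [fC, ENNReal.tsum_eq_iSup_sum, lt_iSup_iff] at hf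
  obtain ⟨s, hs⟩ := hf
  refine ⟨s.biUnion fun j => (hfin (j + 1)).toFinset, ?_, ?_⟩
  · simp only [Finset.mem_biUnion, Set.Finite.mem_toFinset]
    rintro w ⟨j, -, hwC, hlen⟩
    exact ⟨hwC, by omega⟩
  have hdisj : (s : Set ℕ).PairwiseDisjoint fun j => (hfin (j + 1)).toFinset :=
    fun i _ j _ hij => Finset.disjoint_left.mpr fun w hi hj => hij <| by
      have := ((hfin _).mem_toFinset.mp hi).2
      have := ((hfin _).mem_toFinset.mp hj).2
      omega
  rw [← ENNReal.one_lt_ofReal, ENNReal.ofReal_sum_of_nonneg fun _ _ => by positivity,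
    Finset.sum_biUnion hdisj]
  convert hs using 2 with j
  rw [Finset.sum_congr rfl fun w hw => by rw [((hfin _).mem_toFinset.mp hw).2],
    Finset.sum_const, nsmul_eq_mul, Set.ncard_eq_toFinset_card _ (hfin _), ← Real.exp_nat_mul]
  push_cast
  ring_nf

theorem stmt9_general [Fintype A] [TopologicalSpace A]
    (C : Set (List A)) (α : ℝ) (hUD : UniqueDecomposition C) (hf : 1 < fC C α) :
    α < entropy (Xset C) := by
  obtain ⟨D, hD, hT⟩ := exists_finset_one_lt_sum_exp_pow hf
  have hDN (w : List A) (hw : w ∈ D) : w ∈ C ∧ 0 < w.length ∧ w.length ≤ D.sup List.length :=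
    ⟨(hD w hw).1, (hD w hw).2, Finset.le_sup (f := List.length) hw⟩
  have key := lt_limsup_log_div_of_pow_le (isBoundedUnder_log_ncard_language (Xset C))
    (Real.exp_pos (-α)) hT fun m hm =>
      pow_sum_le_sum_ncard_language hUD hDN (Real.exp_pos (-α)).le hm
  rwa [Real.log_exp, neg_neg] at key

/-- if `C` has unique decomposition and `f_C(α) > 1` (possibly `= ∞`),
then `h(X_C) > α`. -/
theorem stmt9 [Fintype A] [TopologicalSpace A] [DiscreteTopology A]
    (C : Set (List A)) (α : ℝ) (hUD : UniqueDecomposition C) (hf : 1 < fC C α) :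
    α < entropy (Xset C) :=
  stmt9_general C α hUD hf
end

section
/- Let A = {1,2,3,4,0} and C = {a_1⋯a_n 0^{⌊log₂ n⌋} : n ≥ 2, a_i ∈ {1,2,3,4}}. Then f_C(ln 4) = Σ_{n≥2} 4^n · 4^{-(n + ⌊log₂ n⌋)} = 1, while Σ_{n≥2} (n + ⌊log₂ n⌋) · 4^n · 4^{-(n + ⌊log₂ n⌋)} = ∞, since 4^{-⌊log₂ n⌋} ≥ 4^{-log₂ n} = n^{-2} up to a bounded factor and Σ n · n^{-2} diverges. -/
open Filter Topology MeasureTheory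

variable {A : Type*}

/-- The code word set `C = {a₁⋯a_n 0^{⌊log₂ n⌋} : n ≥ 2, aᵢ ∈ {1,2,3,4}}`
over the alphabet `{0,1,2,3,4}`. -/
def C17 : Set (List (Fin 5)) :=
  {w | ∃ n : ℕ, 2 ≤ n ∧ ∃ l : List (Fin 5), l.length = n ∧
    (∀ a ∈ l, a = 1 ∨ a = 2 ∨ a = 3 ∨ a = 4) ∧
    w = l ++ List.replicate (Nat.log 2 n) 0}

/-!
Every code word of `C` has the form `a₁⋯aₙ 0^{⌊log₂ n⌋}`, and `n ↦ n + ⌊log₂ n⌋` is injective, so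
`C` has exactly `4ⁿ` words of length `n + ⌊log₂ n⌋` and none of any other length. Hence
`f_C(ln 4) = ∑_{n ≥ 2} 4^{-⌊log₂ n⌋}`; grouping the `2^k` integers `n` with `⌊log₂ n⌋ = k`
turns this into `∑_{k ≥ 1} 2^{-k} = 1`. For the second sum, `4^{⌊log₂ n⌋} ≤ n²` bounds the
`n`-th term below by `1/n`, and the harmonic series diverges.
-/

open scoped ENNReal

lemma ENNReal.tsum_comp_eq_tsum_encard_preimage_mul {β γ : Type*} (f : γ → ℝ≥0∞) (g : β → γ) :
    ∑' b, f (g b) = ∑' c, (g ⁻¹' {c}).encard * f c := by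
  rw [← ENNReal.tsum_fiberwise _ g]
  refine tsum_congr fun c => ?_
  rw [← ENNReal.tsum_set_const]
  exact tsum_congr fun b => congrArg f b.2

lemma ENNReal.tsum_ofReal_eq_top_of_not_summable {β : Type*} {f : β → ℝ} (hf : ∀ b, 0 ≤ f b)
    (h : ¬Summable f) : ∑' b, ENNReal.ofReal (f b) = ⊤ := by
  by_contra hne
  exact h ((ENNReal.summable_toReal hne).congr fun b => ENNReal.toReal_ofReal (hf b))

lemma ENNReal.ofReal_exp_neg_mul_log {b : ℝ} (hb : 0 < b) (k : ℕ) :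
    ENNReal.ofReal (Real.exp (-k * Real.log b)) = (ENNReal.ofReal b)⁻¹ ^ k := by
  rw [neg_mul, Real.exp_neg, Real.exp_nat_mul, Real.exp_log hb,
    ENNReal.ofReal_inv_of_pos (by positivity), ENNReal.ofReal_pow hb.le, ENNReal.inv_pow]

lemma fC_log_eq_tsum {b : ℝ} (hb : 0 < b) (C : Set (List A)) :
    fC C (Real.log b) = ∑' n : ℕ, (Cwords C (n + 1)).ncard * (ENNReal.ofReal b)⁻¹ ^ (n + 1) := by
  unfold fC
  exact tsum_congr fun n => by rw [← Nat.cast_succ, ENNReal.ofReal_exp_neg_mul_log hb]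

namespace Nat

lemma strictMono_add_log (b : ℕ) : StrictMono fun n => n + Nat.log b n :=
  fun _ _ h => Nat.add_lt_add_of_lt_of_le h (Nat.log_mono_right h.le)

lemma preimage_log_two_add_two_zero : (fun n => Nat.log 2 (n + 2)) ⁻¹' {0} = ∅ :=
  Set.eq_empty_of_forall_notMem fun n hn => (Nat.log_pos one_lt_two (by omega)).ne' hn

lemma preimage_log_two_add_two_succ (k : ℕ) :
    (fun n => Nat.log 2 (n + 2)) ⁻¹' {k + 1} = Set.Ico (2 ^ (k + 1) - 2) (2 ^ (k + 2) - 2) := by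
  have h2 : 2 ≤ 2 ^ (k + 1) := Nat.le_self_pow k.succ_ne_zero 2
  ext n
  simp only [Set.mem_preimage, Set.mem_singleton_iff, Set.mem_Ico,
    Nat.log_eq_iff (Or.inl k.succ_ne_zero), pow_succ 2 (k + 1)]
  omega

lemma four_pow_log_two_le_sq {m : ℕ} (hm : m ≠ 0) : 4 ^ Nat.log 2 m ≤ m ^ 2 := by
  rw [show 4 = 2 ^ 2 by rfl, ← pow_mul, mul_comm, pow_mul]
  exact Nat.pow_le_pow_left (Nat.pow_log_le_self 2 hm) 2

end Nat

lemma one_div_le_add_log_mul_div {m : ℕ} (hm : m ≠ 0) :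
    1 / (m : ℝ) ≤ ((m : ℝ) + Nat.log 2 m) * 4 ^ m / 4 ^ (m + Nat.log 2 m) := by
  have hsq : (4 : ℝ) ^ Nat.log 2 m ≤ (m : ℝ) ^ 2 := by exact_mod_cast Nat.four_pow_log_two_le_sq hm
  have hmpos : (0 : ℝ) < m := by positivity
  rw [pow_add, mul_comm ((4 : ℝ) ^ m), mul_div_mul_right _ _ (by positivity),
    div_le_div_iff₀ hmpos (by positivity)]
  nlinarith [(Nat.log 2 m).cast_nonneg (α := ℝ)]

lemma tsum_inv_four_pow_log_two_add_two :
    ∑' n : ℕ, (4 : ℝ≥0∞)⁻¹ ^ Nat.log 2 (n + 2) = 1 := by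
  have block (k : ℕ) :
      (Set.Ico (2 ^ (k + 1) - 2) (2 ^ (k + 2) - 2)).encard * (4 : ℝ≥0∞)⁻¹ ^ (k + 1) =
        2⁻¹ ^ (k + 1) := by
    have h2 : 2 ≤ 2 ^ (k + 1) := Nat.le_self_pow k.succ_ne_zero 2
    rw [← (Set.finite_Ico _ _).cast_ncard_eq, Set.ncard_Ico_nat,
      show 2 ^ (k + 2) - 2 - (2 ^ (k + 1) - 2) = 2 ^ (k + 1) by rw [pow_succ 2 (k + 1)]; omega,
      ENat.toENNReal_coe, Nat.cast_pow, Nat.cast_ofNat, ← mul_pow,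
      show (4 : ℝ≥0∞) = 2 * 2 by norm_num, ENNReal.mul_inv (by simp) (by simp), ← mul_assoc,
      ENNReal.mul_inv_cancel two_ne_zero ENNReal.ofNat_ne_top, one_mul]
  rw [ENNReal.tsum_comp_eq_tsum_encard_preimage_mul (fun k => (4 : ℝ≥0∞)⁻¹ ^ k),
    tsum_eq_zero_add' ENNReal.summable]
  simp only [Nat.preimage_log_two_add_two_zero, Set.encard_empty,
    Nat.preimage_log_two_add_two_succ, block]
  rw [ENat.toENNReal_zero, zero_mul, zero_add, ENNReal.tsum_geometric_add_one,
    ENNReal.one_sub_inv_two, inv_inv, ENNReal.inv_mul_cancel two_ne_zero ENNReal.ofNat_ne_top]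

lemma length_of_mem_C17 {w : List (Fin 5)} (hw : w ∈ C17) :
    ∃ n, 2 ≤ n ∧ w.length = n + Nat.log 2 n := by
  obtain ⟨n, hn, l, rfl, -, rfl⟩ := hw
  exact ⟨l.length, hn, by simp⟩

lemma cwords_C17_add_log {n : ℕ} (hn : 2 ≤ n) :
    Cwords C17 (n + Nat.log 2 n) = Set.range fun f : Fin n → Fin 4 =>
      List.ofFn (fun i => (f i).succ) ++ List.replicate (Nat.log 2 n) 0 := by
  ext w
  constructor
  · rintro ⟨⟨n', -, l, rfl, hl, rfl⟩, hlen⟩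
    obtain rfl : l.length = n := (Nat.strictMono_add_log 2).injective (by simpa using hlen)
    have hne (i : Fin l.length) : l[(i : ℕ)] ≠ 0 := by
      have key : ∀ a : Fin 5, (a = 1 ∨ a = 2 ∨ a = 3 ∨ a = 4) → a ≠ 0 := by decide
      exact key _ (hl _ (List.getElem_mem i.2))
    refine ⟨fun i => l[(i : ℕ)].pred (hne i), ?_⟩
    simp only [Fin.succ_pred]
    rw [List.ofFn_getElem]
  · rintro ⟨f, rfl⟩
    have key : ∀ b : Fin 4, b.succ = 1 ∨ b.succ = 2 ∨ b.succ = 3 ∨ b.succ = 4 := by decide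
    refine ⟨⟨n, hn, _, List.length_ofFn, ?_, rfl⟩, by simp⟩
    intro a ha
    obtain ⟨i, rfl⟩ := List.mem_ofFn.1 ha
    exact key (f i)

lemma ncard_cwords_C17_add_log {n : ℕ} (hn : 2 ≤ n) :
    (Cwords C17 (n + Nat.log 2 n)).ncard = 4 ^ n := by
  rw [cwords_C17_add_log hn, Set.ncard_range_of_injective, Nat.card_eq_fintype_card]
  · simp
  intro f f' h
  funext i
  exact Fin.succ_injective _ (congrFun (List.ofFn_injective (List.append_cancel_right h)) i)

lemma fC_C17_log_four : fC C17 (Real.log 4) = ∑' n : ℕ, (4 : ℝ≥0∞)⁻¹ ^ Nat.log 2 (n + 2) := by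
  rw [fC_log_eq_tsum (by norm_num : (0 : ℝ) < 4), ENNReal.ofReal_ofNat]
  -- `g n + 1` is the length of the code words with `n + 2` free letters
  set g : ℕ → ℕ := fun n => n + 1 + Nat.log 2 (n + 2)
  have hg : g.Injective := fun a b h => by
    have := (Nat.strictMono_add_log 2).injective
      (show a + 2 + Nat.log 2 (a + 2) = b + 2 + Nat.log 2 (b + 2) by simp only [g] at h; omega)
    omega
  have hsupp : Function.support
      (fun m => ((Cwords C17 (m + 1)).ncard : ℝ≥0∞) * (4 : ℝ≥0∞)⁻¹ ^ (m + 1)) ⊆ Set.range g := by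
    intro m hm
    obtain ⟨w, hwC, hwlen⟩ := Set.nonempty_of_ncard_ne_zero (by simpa using left_ne_zero_of_mul hm)
    obtain ⟨n, hn, hlen⟩ := length_of_mem_C17 hwC
    obtain ⟨k, rfl⟩ := Nat.exists_eq_add_of_le' hn
    exact ⟨k, by simp only [g]; omega⟩
  rw [← hg.tsum_eq hsupp]
  refine tsum_congr fun n => ?_
  rw [show g n + 1 = n + 2 + Nat.log 2 (n + 2) by simp only [g]; omega,
    ncard_cwords_C17_add_log (by omega), Nat.cast_pow, Nat.cast_ofNat, pow_add (4 : ℝ≥0∞)⁻¹,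
    ← mul_assoc, ← mul_pow, ENNReal.mul_inv_cancel (by norm_num) (by norm_num), one_pow, one_mul]

/-- `f_C(ln 4) = ∑_{n≥2} 4ⁿ·4^{-(n+⌊log₂ n⌋)} = 1`, while
`∑_{n≥2} (n+⌊log₂ n⌋)·4ⁿ·4^{-(n+⌊log₂ n⌋)} = ∞` (null recurrence). -/
theorem stmt17 :
    fC C17 (Real.log 4) = 1 ∧
    ∑' n : ℕ, ENNReal.ofReal
      ((((n : ℝ) + 2) + (Nat.log 2 (n + 2) : ℝ)) * 4 ^ (n + 2) /
        4 ^ (n + 2 + Nat.log 2 (n + 2))) = ⊤ := by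
  refine ⟨by rw [fC_C17_log_four, tsum_inv_four_pow_log_two_add_two], top_unique ?_⟩
  have harmonic : ¬Summable fun n : ℕ => 1 / ((n : ℝ) + 2) := by
    exact_mod_cast mt (summable_nat_add_iff 2).1 Real.not_summable_one_div_natCast
  calc ⊤ = ∑' n : ℕ, ENNReal.ofReal (1 / ((n : ℝ) + 2)) :=
        (ENNReal.tsum_ofReal_eq_top_of_not_summable (fun n => by positivity) harmonic).symm
    _ ≤ _ := ENNReal.tsum_le_tsum fun n => ENNReal.ofReal_le_ofReal <| by
        exact_mod_cast one_div_le_add_log_mul_div (m := n + 2) (by omega)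
end
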